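/- arXiv:2312.11089 — 5 statements merged into one kernel-verified Lean document; each statement's English description precedes it below -/
import Mathlib

section
/- Let f : ℝ → ℝ be continuous and strictly increasing, let v_l, v_r > 0, and let U_l > U_r be real numbers. Define K(x) = f(x)·((v_r − v_l)·x − (v_r·U_r − v_l·U_l)) − x·(v_r·f(U_r) − v_l·f(U_l)) + (v_r·U_r·f(U_r) − v_l·U_l·f(U_l)). Then K(U_l) > 0 and K(U_r) < 0, and hence K has a zero in the open interval (U_r, U_l). -/
/-- the function K arising in the Riemann problem for the generalized
pressureless Euler system satisfies K(U_l) > 0, K(U_r) < 0, hence has a zero in (U_r, U_l). -/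
theorem riemann_K_has_zero
    (f : ℝ → ℝ) (hf : Continuous f) (hmono : StrictMono f)
    (vl vr Ul Ur : ℝ) (hvl : 0 < vl) (hvr : 0 < vr) (hU : Ur < Ul)
    (K : ℝ → ℝ)
    (hK : K = fun x => f x * ((vr - vl) * x - (vr * Ur - vl * Ul))
        - x * (vr * f Ur - vl * f Ul) + (vr * Ur * f Ur - vl * Ul * f Ul)) :
    0 < K Ul ∧ K Ur < 0 ∧ ∃ x ∈ Set.Ioo Ur Ul, K x = 0 := by
  have hfU : f Ur < f Ul := hmono hU
  have h1 : 0 < K Ul := by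
    have : K Ul = vr * (Ul - Ur) * (f Ul - f Ur) := by rw [hK]; ring
    rw [this]; exact mul_pos (mul_pos hvr (by linarith)) (by linarith)
  have h2 : K Ur < 0 := by
    have : K Ur = -(vl * (Ul - Ur) * (f Ul - f Ur)) := by rw [hK]; ring
    rw [this]
    have : 0 < vl * (Ul - Ur) * (f Ul - f Ur) := mul_pos (mul_pos hvl (by linarith)) (by linarith)
    linarith
  refine ⟨h1, h2, ?_⟩
  have hcont : ContinuousOn K (Set.Icc Ur Ul) := by
    rw [hK]; fun_prop
  have := intermediate_value_Ioo hU.le hcont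
  have hmem : (0:ℝ) ∈ Set.Ioo (K Ur) (K Ul) := ⟨h2, h1⟩
  obtain ⟨x, hx, hx0⟩ := this hmem
  exact ⟨x, hx, hx0⟩
end

section
/- Let f : ℝ → ℝ be differentiable with f' > 0 everywhere, let v_l, v_r > 0 and U_l > U_r. Define K(x) = f(x)·((v_r − v_l)·x − (v_r·U_r − v_l·U_l)) − x·(v_r·f(U_r) − v_l·f(U_l)) + (v_r·U_r·f(U_r) − v_l·U_l·f(U_l)). Then K'(x) = v_r·(x − U_r)·f'(x) + v_l·(U_l − x)·f'(x) + v_r·(f(x) − f(U_r)) + v_l·(f(U_l) − f(x)), and K' > 0 on the interval (U_r, U_l); consequently K has a unique zero in (U_r, U_l). -/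
/-- formula for K' and strict monotonicity of K on (U_r, U_l), giving the
unique zero of K in (U_r, U_l) (the unique overcompressive shadow-wave speed). -/
theorem riemann_K_unique_zero
    (f : ℝ → ℝ) (hf : Differentiable ℝ f) (hf' : ∀ x, 0 < deriv f x)
    (vl vr Ul Ur : ℝ) (hvl : 0 < vl) (hvr : 0 < vr) (hU : Ur < Ul)
    (K : ℝ → ℝ)
    (hK : K = fun x => f x * ((vr - vl) * x - (vr * Ur - vl * Ul))
        - x * (vr * f Ur - vl * f Ul) + (vr * Ur * f Ur - vl * Ul * f Ul)) :
    (∀ x, deriv K x = vr * (x - Ur) * deriv f x + vl * (Ul - x) * deriv f x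
        + vr * (f x - f Ur) + vl * (f Ul - f x)) ∧
    (∀ x ∈ Set.Ioo Ur Ul, 0 < deriv K x) ∧
    (∃! x, x ∈ Set.Ioo Ur Ul ∧ K x = 0) := by
  have hfmono : StrictMono f := strictMono_of_deriv_pos hf'
  have hderiv : ∀ x, HasDerivAt K
      (deriv f x * ((vr - vl) * x - (vr * Ur - vl * Ul)) + f x * (vr - vl)
        - (vr * f Ur - vl * f Ul)) x := by
    intro x
    subst hK
    have h1 : HasDerivAt (fun x => (vr - vl) * x - (vr * Ur - vl * Ul)) (vr - vl) x := by
      simpa using (((hasDerivAt_id x).const_mul (vr - vl)).sub_const (vr * Ur - vl * Ul))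
    have h2 := ((hf x).hasDerivAt.mul h1)
    have h3 : HasDerivAt (fun x : ℝ => x * (vr * f Ur - vl * f Ul))
        (vr * f Ur - vl * f Ul) x := by
      simpa using (hasDerivAt_id x).mul_const (vr * f Ur - vl * f Ul)
    simpa using (h2.sub h3).add_const (vr * Ur * f Ur - vl * Ul * f Ul)
  have hdK : ∀ x, deriv K x = vr * (x - Ur) * deriv f x + vl * (Ul - x) * deriv f x
      + vr * (f x - f Ur) + vl * (f Ul - f x) := by
    intro x
    rw [(hderiv x).deriv]; ring
  refine ⟨hdK, ?_, ?_⟩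
  · intro x hx
    rw [hdK x]
    have h1 : 0 < vr * (x - Ur) * deriv f x :=
      mul_pos (mul_pos hvr (sub_pos.2 hx.1)) (hf' x)
    have h2 : 0 < vl * (Ul - x) * deriv f x :=
      mul_pos (mul_pos hvl (sub_pos.2 hx.2)) (hf' x)
    have h3 : 0 < vr * (f x - f Ur) := mul_pos hvr (sub_pos.2 (hfmono hx.1))
    have h4 : 0 < vl * (f Ul - f x) := mul_pos hvl (sub_pos.2 (hfmono hx.2))
    linarith
  · -- existence
    have hKcont : Continuous K := by
      have := hf.continuous
      subst hK
      fun_prop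
    have hKUr : K Ur = vl * (Ul - Ur) * (f Ur - f Ul) := by rw [hK]; ring
    have hKUl : K Ul = vr * (Ul - Ur) * (f Ul - f Ur) := by rw [hK]; ring
    have hneg : K Ur < 0 := by
      rw [hKUr]
      have := mul_pos hvl (sub_pos.2 hU)
      nlinarith [hfmono hU]
    have hpos : 0 < K Ul := by
      rw [hKUl]
      have := mul_pos hvr (sub_pos.2 hU)
      nlinarith [hfmono hU]
    have hsub := intermediate_value_Ioo (le_of_lt hU) hKcont.continuousOn
    obtain ⟨c, hc, hKc⟩ := hsub ⟨hneg, hpos⟩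
    have hmonoK : StrictMonoOn K (Set.Icc Ur Ul) := by
      apply strictMonoOn_of_deriv_pos (convex_Icc Ur Ul) hKcont.continuousOn
      intro x hx
      rw [interior_Icc] at hx
      rw [hdK x]
      have h1 : 0 < vr * (x - Ur) * deriv f x :=
        mul_pos (mul_pos hvr (sub_pos.2 hx.1)) (hf' x)
      have h2 : 0 < vl * (Ul - x) * deriv f x :=
        mul_pos (mul_pos hvl (sub_pos.2 hx.2)) (hf' x)
      have h3 : 0 < vr * (f x - f Ur) := mul_pos hvr (sub_pos.2 (hfmono hx.1))
      have h4 : 0 < vl * (f Ul - f x) := mul_pos hvl (sub_pos.2 (hfmono hx.2))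
      linarith
    refine ⟨c, ⟨hc, hKc⟩, ?_⟩
    intro y ⟨hy, hKy⟩
    have hinj := hmonoK.injOn
    exact hinj (Set.Ioo_subset_Icc_self hy) (Set.Ioo_subset_Icc_self hc) (by rw [hKy, hKc])
end

section
/- With F(y,x,t) as above and F(x,t) := min over y of F(y,x,t), for fixed t > 0 the function x ↦ F(x,t) is differentiable almost everywhere with ∂F/∂x(x,t) = −m(x,t), where m(x,t) = ∫₀^{y_*(x,t)} v₀(η) dη. More precisely, for x < x' one has (x' − x)·m(x,t) ≤ F(x,t) − F(x',t) ≤ (x' − x)·m(x',t). -/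
open MeasureTheory

/-- with F(x,t) = min_y F(y,x,t) and m(x,t) = ∫₀^{y_*(x,t)} v₀, one has the
two-sided bound (x'−x)m(x,t) ≤ F(x,t) − F(x',t) ≤ (x'−x)m(x',t) for x < x', and x ↦ F(x,t)
is differentiable almost everywhere with ∂F/∂x = −m. -/
theorem potential_x_derivative
    (κ t : ℝ) (hκ : 0 < κ) (ht : 0 < t)
    (v₀ u₀ : ℝ → ℝ) (hv₀ : ∀ η, 0 < v₀ η)
    (hv₀int : ∀ a b : ℝ, IntervalIntegrable v₀ volume a b)
    (hXint : ∀ a b : ℝ, IntervalIntegrable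
      (fun η => ((η / (2 * κ) + u₀ η / 2) * (t + κ)
        + (η / 2 - u₀ η * κ / 2) * (κ / (t + κ))) * v₀ η) volume a b)
    (F : ℝ → ℝ → ℝ)
    (hF : F = fun y x => ∫ η in (0:ℝ)..y,
      ((η / (2 * κ) + u₀ η / 2) * (t + κ)
        + (η / 2 - u₀ η * κ / 2) * (κ / (t + κ)) - x) * v₀ η)
    (ystar : ℝ → ℝ)
    (hstar : ∀ x, IsLeast {y | ∀ z, F y x ≤ F z x} (ystar x))
    (m Fm : ℝ → ℝ)
    (hm : m = fun x => ∫ η in (0:ℝ)..ystar x, v₀ η)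
    (hFm : Fm = fun x => F (ystar x) x) :
    (∀ x x' : ℝ, x < x' →
      (x' - x) * m x ≤ Fm x - Fm x' ∧ Fm x - Fm x' ≤ (x' - x) * m x') ∧
    (∀ᵐ x : ℝ, HasDerivAt Fm (-(m x)) x) := by
  set A : ℝ → ℝ := fun η => (η / (2 * κ) + u₀ η / 2) * (t + κ)
        + (η / 2 - u₀ η * κ / 2) * (κ / (t + κ)) with hA
  have hFint : ∀ (x a b : ℝ), IntervalIntegrable (fun η => (A η - x) * v₀ η) volume a b := by
    intro x a b
    have h := (hXint a b).sub ((hv₀int a b).const_mul x)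
    have he : (fun η => (A η - x) * v₀ η) = fun η => A η * v₀ η - x * v₀ η := by
      funext η; ring
    rw [he]; exact h
  have key : ∀ y x x' : ℝ, F y x - F y x' = (x' - x) * ∫ η in (0:ℝ)..y, v₀ η := by
    intro y x x'
    rw [hF]
    simp only
    rw [← intervalIntegral.integral_sub (hFint x 0 y) (hFint x' 0 y),
        ← intervalIntegral.integral_const_mul]
    congr 1; funext η; ring
  have hFmx : ∀ x, Fm x = F (ystar x) x := fun x => by rw [hFm]
  have hmx : ∀ x, m x = ∫ η in (0:ℝ)..ystar x, v₀ η := fun x => by rw [hm]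
  have bound : ∀ x x' : ℝ,
      (x' - x) * m x ≤ Fm x - Fm x' ∧ Fm x - Fm x' ≤ (x' - x) * m x' := by
    intro x x'
    constructor
    · have h1 : Fm x' ≤ F (ystar x) x' := by rw [hFm]; exact (hstar x').1 (ystar x)
      have h2 : F (ystar x) x - F (ystar x) x' = (x' - x) * m x := by
        rw [hmx]; exact key _ _ _
      rw [hFmx x]; linarith
    · have h1 : Fm x ≤ F (ystar x') x := by rw [hFm]; exact (hstar x).1 (ystar x')
      have h2 : F (ystar x') x - F (ystar x') x' = (x' - x) * m x' := by
        rw [hmx]; exact key _ _ _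
      rw [hFmx x']; linarith
  have hmono : Monotone m := by
    intro x x' hle
    rcases eq_or_lt_of_le hle with h | h
    · rw [h]
    · have hb := bound x x'
      have hpos : 0 < x' - x := by linarith
      have : (x' - x) * m x ≤ (x' - x) * m x' := le_trans hb.1 hb.2
      exact le_of_mul_le_mul_left this hpos
  refine ⟨fun x x' _ => bound x x', ?_⟩
  have hcont : ∀ᵐ x : ℝ, ContinuousAt m x := by
    have hc : {x | ¬ContinuousAt m x}.Countable := hmono.countable_not_continuousAt
    have : volume {x | ¬ContinuousAt m x} = 0 := hc.measure_zero _
    exact this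
  filter_upwards [hcont] with x hx
  rw [hasDerivAt_iff_tendsto_slope]
  have hslope : ∀ y : ℝ, y ≠ x → |slope Fm x y + m x| ≤ |m y - m x| := by
    intro y hy
    rcases lt_or_gt_of_ne hy with h | h
    · -- y < x
      have hpos : 0 < x - y := by linarith
      have hb := bound y x
      have hs : slope Fm x y = (Fm x - Fm y) / (x - y) := by
        rw [slope_def_field, div_eq_div_iff (by linarith) (by linarith)]
        ring
      have h1 : slope Fm x y ≤ -(m y) := by
        rw [hs, div_le_iff₀ hpos]; linarith [hb.1]
      have h2 : -(m x) ≤ slope Fm x y := by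
        rw [hs, le_div_iff₀ hpos]; linarith [hb.2]
      have h3 : m y ≤ m x := hmono h.le
      have habs : |m y - m x| = m x - m y := by
        rw [abs_of_nonpos (by linarith : m y - m x ≤ 0)]; ring
      rw [habs, abs_le]
      constructor <;> linarith
    · -- x < y
      have hpos : 0 < y - x := by linarith
      have hb := bound x y
      have hs : slope Fm x y = (Fm y - Fm x) / (y - x) := slope_def_field Fm x y
      have h1 : -(m y) ≤ slope Fm x y := by
        rw [hs, le_div_iff₀ hpos]; linarith [hb.2]
      have h2 : slope Fm x y ≤ -(m x) := by
        rw [hs, div_le_iff₀ hpos]; linarith [hb.1]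
      have h3 : m x ≤ m y := hmono h.le
      have habs : |m y - m x| = m y - m x := abs_of_nonneg (by linarith)
      rw [habs, abs_le]
      constructor <;> linarith
  rw [← tendsto_sub_nhds_zero_iff]
  have hm0 : Filter.Tendsto (fun y => |m y - m x|) (nhdsWithin x {x}ᶜ) (nhds 0) := by
    have h1 : Filter.Tendsto (fun y => |m y - m x|) (nhds x) (nhds |m x - m x|) :=
      ((hx.tendsto.sub tendsto_const_nhds).abs)
    simpa using h1.mono_left nhdsWithin_le_nhds
  apply squeeze_zero_norm' _ hm0
  filter_upwards [self_mem_nhdsWithin] with y hy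
  have : slope Fm x y - -(m x) = slope Fm x y + m x := by ring
  rw [Real.norm_eq_abs, this]
  exact hslope y hy
end

section
/- Fix t > 0 and x ∈ ℝ and let y_*(x,t) be a minimizer of y ↦ F(y,x,t). Then the function t' ↦ F(x,t') := min_y F(y,x,t') satisfies, for h ≠ 0 small, the two-sided bound: ∫₀^{y_*(x,t+h)} [(η/(2κ) + u₀(η)/2) + (η/2 − u₀(η)κ/2)·(1/h)(κ/(t+h+κ) − κ/(t+κ))] v₀(η) dη ≤ (F(x,t+h) − F(x,t))/h ≤ ∫₀^{y_*(x,t)} [same integrand] v₀(η) dη (for h > 0), and consequently ∂F/∂t(x,t) = q(x,t) where q(x,t) = ∫₀^{y_*(x,t)} [(η/(2κ) + u₀(η)/2) − (η/2 − u₀(η)κ/2)·κ/(t+κ)²]·v₀(η) dη, provided y_*(x,t+h) → y_*(x,t) as h → 0. -/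
open MeasureTheory

/-- Interval integrability of affine combinations against `v₀`. -/
lemma aux_base_int (v₀ u₀ : ℝ → ℝ)
    (hv₀int : ∀ a b : ℝ, IntervalIntegrable v₀ volume a b)
    (hu₀int : ∀ a b : ℝ, IntervalIntegrable (fun η => u₀ η * v₀ η) volume a b)
    (a b c₁ c₂ c₃ : ℝ) :
    IntervalIntegrable (fun η => (c₁ * η + c₂ * u₀ η + c₃) * v₀ η) volume a b := by
  have h1 : IntervalIntegrable (fun η : ℝ => η * v₀ η) volume a b :=
    (hv₀int a b).continuousOn_mul continuous_id.continuousOn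
  have h : (fun η => (c₁ * η + c₂ * u₀ η + c₃) * v₀ η)
      = fun η => c₁ * (η * v₀ η) + c₂ * (u₀ η * v₀ η) + c₃ * v₀ η := by
    funext η; ring
  rw [h]
  exact ((h1.const_mul c₁).add ((hu₀int a b).const_mul c₂)).add ((hv₀int a b).const_mul c₃)

/-- time derivative of the minimized potential: the two-sided difference
quotient bound for h > 0 and, assuming y_*(x,t+h) → y_*(x,t), ∂F/∂t(x,t) = q(x,t). -/
theorem potential_t_derivative
    (κ t x : ℝ) (hκ : 0 < κ) (ht : 0 < t)
    (v₀ u₀ : ℝ → ℝ) (hv₀ : ∀ η, 0 < v₀ η)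
    (hv₀int : ∀ a b : ℝ, IntervalIntegrable v₀ volume a b)
    (hu₀int : ∀ a b : ℝ, IntervalIntegrable (fun η => u₀ η * v₀ η) volume a b)
    (F : ℝ → ℝ → ℝ)
    (hF : F = fun y s => ∫ η in (0:ℝ)..y,
      ((η / (2 * κ) + u₀ η / 2) * (s + κ)
        + (η / 2 - u₀ η * κ / 2) * (κ / (s + κ)) - x) * v₀ η)
    (ystar : ℝ → ℝ)
    (hstar : ∀ s : ℝ, 0 < s → IsLeast {y | ∀ z, F y s ≤ F z s} (ystar s))
    (hcont : Filter.Tendsto ystar (nhds t) (nhds (ystar t)))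
    (Fm : ℝ → ℝ) (hFm : Fm = fun s => F (ystar s) s)
    (q : ℝ)
    (hq : q = ∫ η in (0:ℝ)..ystar t,
      ((η / (2 * κ) + u₀ η / 2) - (η / 2 - u₀ η * κ / 2) * (κ / (t + κ) ^ 2)) * v₀ η) :
    (∀ h : ℝ, 0 < h →
      (∫ η in (0:ℝ)..ystar (t + h),
          ((η / (2 * κ) + u₀ η / 2)
            + (η / 2 - u₀ η * κ / 2) * ((1 / h) * (κ / (t + h + κ) - κ / (t + κ)))) * v₀ η)
        ≤ (Fm (t + h) - Fm t) / h ∧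
      (Fm (t + h) - Fm t) / h ≤
        ∫ η in (0:ℝ)..ystar t,
          ((η / (2 * κ) + u₀ η / 2)
            + (η / 2 - u₀ η * κ / 2) * ((1 / h) * (κ / (t + h + κ) - κ / (t + κ)))) * v₀ η) ∧
    HasDerivAt Fm q t := by
  have hκ' : (2 : ℝ) * κ ≠ 0 := by positivity
  have htκ : (0:ℝ) < t + κ := by linarith
  -- The family of integrals appearing in the bounds.
  set I : ℝ → ℝ → ℝ := fun y r => ∫ η in (0:ℝ)..y,
      ((η / (2 * κ) + u₀ η / 2) + (η / 2 - u₀ η * κ / 2) * r) * v₀ η with hI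
  -- integrability of the integrand of `I`
  have intI : ∀ a b r : ℝ, IntervalIntegrable
      (fun η => ((η / (2 * κ) + u₀ η / 2) + (η / 2 - u₀ η * κ / 2) * r) * v₀ η)
      volume a b := by
    intro a b r
    have h : (fun η => ((η / (2 * κ) + u₀ η / 2) + (η / 2 - u₀ η * κ / 2) * r) * v₀ η)
        = fun η => ((1 / (2 * κ) + r / 2) * η + (1 / 2 - r * κ / 2) * u₀ η + 0) * v₀ η := by
      funext η; ring
    rw [h]
    exact aux_base_int v₀ u₀ hv₀int hu₀int a b _ _ _
  -- integrability of the integrand of `F`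
  have intF : ∀ a b s : ℝ, IntervalIntegrable
      (fun η => ((η / (2 * κ) + u₀ η / 2) * (s + κ)
        + (η / 2 - u₀ η * κ / 2) * (κ / (s + κ)) - x) * v₀ η) volume a b := by
    intro a b s
    have h : (fun η => ((η / (2 * κ) + u₀ η / 2) * (s + κ)
        + (η / 2 - u₀ η * κ / 2) * (κ / (s + κ)) - x) * v₀ η)
        = fun η => (((s + κ) / (2 * κ) + (κ / (s + κ)) / 2) * η
            + ((s + κ) / 2 - (κ / (s + κ)) * κ / 2) * u₀ η + (-x)) * v₀ η := by
      funext η; ring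
    rw [h]
    exact aux_base_int v₀ u₀ hv₀int hu₀int a b _ _ _
  -- key difference identity
  have diff : ∀ y s r : ℝ, (s - t) * r = κ / (s + κ) - κ / (t + κ) →
      F y s - F y t = (s - t) * I y r := by
    intro y s r hr
    rw [hF]
    rw [← intervalIntegral.integral_sub (intF 0 y s) (intF 0 y t)]
    rw [hI]
    rw [← intervalIntegral.integral_const_mul]
    apply intervalIntegral.integral_congr
    intro η _
    have : κ / (s + κ) = κ / (t + κ) + (s - t) * r := by linarith
    rw [this]
    ring
  -- splitting of I
  have intJ : ∀ a b : ℝ, IntervalIntegrable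
      (fun η => (η / (2 * κ) + u₀ η / 2) * v₀ η) volume a b := by
    intro a b
    have h : (fun η => (η / (2 * κ) + u₀ η / 2) * v₀ η)
        = fun η => ((1 / (2 * κ)) * η + (1 / 2) * u₀ η + 0) * v₀ η := by
      funext η; field_simp; ring
    rw [h]; exact aux_base_int v₀ u₀ hv₀int hu₀int a b _ _ _
  have intK : ∀ a b : ℝ, IntervalIntegrable
      (fun η => (η / 2 - u₀ η * κ / 2) * v₀ η) volume a b := by
    intro a b
    have h : (fun η => (η / 2 - u₀ η * κ / 2) * v₀ η)
        = fun η => ((1 / 2) * η + (-(κ / 2)) * u₀ η + 0) * v₀ η := by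
      funext η; ring
    rw [h]; exact aux_base_int v₀ u₀ hv₀int hu₀int a b _ _ _
  set J : ℝ → ℝ := fun y => ∫ η in (0:ℝ)..y, (η / (2 * κ) + u₀ η / 2) * v₀ η with hJ
  set K : ℝ → ℝ := fun y => ∫ η in (0:ℝ)..y, (η / 2 - u₀ η * κ / 2) * v₀ η with hK
  have Isplit : ∀ y r : ℝ, I y r = J y + r * K y := by
    intro y r
    rw [hI, hJ, hK]
    simp only
    rw [← intervalIntegral.integral_const_mul,
      ← intervalIntegral.integral_add (intJ 0 y) ((intK 0 y).const_mul r)]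
    apply intervalIntegral.integral_congr
    intro η _; ring
  have contJ : Continuous J := intervalIntegral.continuous_primitive intJ 0
  have contK : Continuous K := intervalIntegral.continuous_primitive intK 0
  -- the explicit slope factor
  set ρ : ℝ → ℝ := fun s => -(κ / ((s + κ) * (t + κ))) with hρ
  have ρcont : Filter.Tendsto ρ (nhds t) (nhds (ρ t)) := by
    apply Filter.Tendsto.neg
    apply Filter.Tendsto.div tendsto_const_nhds
    · exact ((continuous_id.add continuous_const).mul continuous_const).tendsto t
    · positivity
  -- q is the limit value
  have hqI : q = I (ystar t) (ρ t) := by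
    rw [hq]
    simp only [hI, hρ]
    apply intervalIntegral.integral_congr
    intro η _
    ring
  -- part 1: two-sided bound for h > 0
  have part1 : ∀ h : ℝ, 0 < h →
      I (ystar (t + h)) ((1 / h) * (κ / (t + h + κ) - κ / (t + κ)))
        ≤ (Fm (t + h) - Fm t) / h ∧
      (Fm (t + h) - Fm t) / h ≤
        I (ystar t) ((1 / h) * (κ / (t + h + κ) - κ / (t + κ))) := by
    intro h hh
    have hh' : h ≠ 0 := ne_of_gt hh
    set r := (1 / h) * (κ / (t + h + κ) - κ / (t + κ)) with hr'
    have hr : (t + h - t) * r = κ / (t + h + κ) - κ / (t + κ) := by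
      rw [hr']; field_simp; ring
    have hpos : 0 < t + h := by linarith
    have e1 := diff (ystar t) (t + h) r hr
    have e2 := diff (ystar (t + h)) (t + h) r hr
    have hs : t + h - t = h := by ring
    rw [hs] at e1 e2
    have min1 := (hstar (t + h) hpos).1 (ystar t)
    have min2 := (hstar t ht).1 (ystar (t + h))
    rw [hFm]
    simp only
    constructor
    · rw [le_div_iff₀ hh]
      -- F (ystar (t+h)) (t+h) - F (ystar t) t ≥ F (ystar (t+h)) (t+h) - F (ystar (t+h)) t
      -- = h * I (ystar (t+h)) r
      have : F (ystar (t + h)) (t + h) - F (ystar (t + h)) t = h * I (ystar (t + h)) r := e2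
      nlinarith [min2, this]
    · rw [div_le_iff₀ hh]
      have : F (ystar t) (t + h) - F (ystar t) t = h * I (ystar t) r := e1
      nlinarith [min1, this]
  refine ⟨fun h hh => part1 h hh, ?_⟩
  -- part 2: the derivative
  rw [hasDerivAt_iff_tendsto_slope]
  have slope_eq : slope Fm t = fun s => (Fm s - Fm t) / (s - t) := by
    funext s; rw [slope_def_field]
  rw [slope_eq]
  -- limits of the two bounding functions
  have Ltend : Filter.Tendsto (fun s => I (ystar s) (ρ s)) (nhds t) (nhds q) := by
    have : (fun s => I (ystar s) (ρ s)) = fun s => J (ystar s) + ρ s * K (ystar s) := by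
      funext s; exact Isplit _ _
    rw [this, hqI, Isplit]
    exact ((contJ.tendsto _).comp hcont).add (ρcont.mul ((contK.tendsto _).comp hcont))
  have Utend : Filter.Tendsto (fun s => I (ystar t) (ρ s)) (nhds t) (nhds q) := by
    have : (fun s => I (ystar t) (ρ s)) = fun s => J (ystar t) + ρ s * K (ystar t) := by
      funext s; exact Isplit _ _
    rw [this, hqI, Isplit]
    exact tendsto_const_nhds.add (ρcont.mul tendsto_const_nhds)
  -- bounds on the slope for s near t
  have key : ∀ s : ℝ, 0 < s → s ≠ t →
      min (I (ystar s) (ρ s)) (I (ystar t) (ρ s)) ≤ (Fm s - Fm t) / (s - t) ∧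
      (Fm s - Fm t) / (s - t) ≤ max (I (ystar s) (ρ s)) (I (ystar t) (ρ s)) := by
    intro s hs hst
    have hsκ : (0:ℝ) < s + κ := by linarith
    have hr : (s - t) * ρ s = κ / (s + κ) - κ / (t + κ) := by
      rw [hρ]; field_simp; ring
    have e1 := diff (ystar t) s (ρ s) hr
    have e2 := diff (ystar s) s (ρ s) hr
    have min1 := (hstar s hs).1 (ystar t)
    have min2 := (hstar t ht).1 (ystar s)
    have hub : Fm s - Fm t ≤ (s - t) * I (ystar t) (ρ s) := by
      rw [hFm]; simp only; linarith
    have hlb : (s - t) * I (ystar s) (ρ s) ≤ Fm s - Fm t := by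
      rw [hFm]; simp only; linarith
    rcases lt_or_gt_of_ne hst with hlt | hgt
    · have hd : s - t < 0 := by linarith
      constructor
      · refine le_trans (min_le_right _ _) ?_
        rw [le_div_iff_of_neg hd]; linarith
      · refine le_trans ?_ (le_max_left _ _)
        rw [div_le_iff_of_neg hd]; linarith
    · have hd : 0 < s - t := by linarith
      constructor
      · refine le_trans (min_le_left _ _) ?_
        rw [le_div_iff₀ hd]; linarith
      · refine le_trans ?_ (le_max_right _ _)
        rw [div_le_iff₀ hd]; linarith
  -- squeeze
  have evpos : ∀ᶠ s in nhdsWithin t {t}ᶜ, 0 < s :=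
    (eventually_gt_nhds ht).filter_mono nhdsWithin_le_nhds
  have evne : ∀ᶠ s in nhdsWithin t {t}ᶜ, s ≠ t :=
    eventually_mem_nhdsWithin.mono (fun s hs => hs)
  have mintend : Filter.Tendsto (fun s => min (I (ystar s) (ρ s)) (I (ystar t) (ρ s)))
      (nhdsWithin t {t}ᶜ) (nhds q) := by
    have := (Ltend.min Utend).mono_left (nhdsWithin_le_nhds (s := {t}ᶜ))
    simpa using this
  have maxtend : Filter.Tendsto (fun s => max (I (ystar s) (ρ s)) (I (ystar t) (ρ s)))
      (nhdsWithin t {t}ᶜ) (nhds q) := by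
    have := (Ltend.max Utend).mono_left (nhdsWithin_le_nhds (s := {t}ᶜ))
    simpa using this
  refine tendsto_of_tendsto_of_tendsto_of_le_of_le' mintend maxtend ?_ ?_
  · filter_upwards [evpos, evne] with s hs hst
    exact (key s hs hst).1
  · filter_upwards [evpos, evne] with s hs hst
    exact (key s hs hst).2
end

section
/- Fix t > 0 and κ > 0. For any x₁ ≠ x₂, the variational solution u(·,t) satisfies the one-sided Lipschitz (Oleinik-type) bound (u(x₂,t) − u(x₁,t))/(x₂ − x₁) ≤ ((t+κ)² + κ²)/((t+κ)·((t+κ)² − κ²)). -/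
/-- one-sided Lipschitz (Oleinik-type) bound for the variational solution:
(u(x₂,t) − u(x₁,t))/(x₂ − x₁) ≤ ((t+κ)² + κ²)/((t+κ)((t+κ)² − κ²)), using that the
minimizer y_*(x,t) is nondecreasing in x. -/
theorem oleinik_one_sided_lipschitz
    (κ t : ℝ) (hκ : 0 < κ) (ht : 0 < t)
    (ystar : ℝ → ℝ) (hmono : Monotone ystar)
    (u : ℝ → ℝ)
    (hu : u = fun x => ((1 + κ ^ 2 / (t + κ) ^ 2) / ((t + κ) - κ ^ 2 / (t + κ)))
        * (x - (1 / 2) * ((t + κ) / κ + κ / (t + κ)) * ystar x)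
        + (ystar x / 2) * (1 / κ - κ / (t + κ) ^ 2)) :
    ∀ x₁ x₂ : ℝ, x₁ ≠ x₂ →
      (u x₂ - u x₁) / (x₂ - x₁)
        ≤ ((t + κ) ^ 2 + κ ^ 2) / ((t + κ) * ((t + κ) ^ 2 - κ ^ 2)) := by
  intro x₁ x₂ hne
  have hs : (0:ℝ) < t + κ := by linarith
  have hd : (0:ℝ) < (t + κ) ^ 2 - κ ^ 2 := by nlinarith
  set C : ℝ := ((t + κ) ^ 2 + κ ^ 2) / ((t + κ) * ((t + κ) ^ 2 - κ ^ 2)) with hC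
  set c : ℝ := (1 / κ - κ / (t + κ) ^ 2) / 2
      - C * ((1 / 2) * ((t + κ) / κ + κ / (t + κ))) with hc
  have hκ0 : κ ≠ 0 := ne_of_gt hκ
  have hs0 : t + κ ≠ 0 := ne_of_gt hs
  have hd0 : (t + κ) ^ 2 - κ ^ 2 ≠ 0 := ne_of_gt hd
  have hden : (t + κ) - κ ^ 2 / (t + κ) ≠ 0 := by
    have h1 : (t + κ) - κ ^ 2 / (t + κ) = ((t + κ) ^ 2 - κ ^ 2) / (t + κ) := by
      field_simp
    rw [h1]
    exact div_ne_zero hd0 hs0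
  have hA : (1 + κ ^ 2 / (t + κ) ^ 2) / ((t + κ) - κ ^ 2 / (t + κ)) = C := by
    rw [hC, div_eq_div_iff hden (by positivity)]
    field_simp
  have hcneg : c ≤ 0 := by
    have h2 : c = -(2 * κ) / ((t + κ) ^ 2 - κ ^ 2) := by
      rw [hc, hC]; field_simp; ring
    rw [h2]
    exact le_of_lt (div_neg_of_neg_of_pos (by linarith) hd)
  have hlin : ∀ x, u x = C * x + c * ystar x := by
    intro x
    rw [hu]
    simp only
    rw [hA, hc]
    ring
  have key : u x₂ - u x₁ - C * (x₂ - x₁) = c * (ystar x₂ - ystar x₁) := by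
    rw [hlin x₁, hlin x₂]; ring
  rcases lt_or_gt_of_ne hne with h | h
  · rw [div_le_iff₀ (by linarith : (0:ℝ) < x₂ - x₁)]
    have hy : ystar x₁ ≤ ystar x₂ := hmono (le_of_lt h)
    nlinarith [mul_nonneg (neg_nonneg.2 hcneg) (by linarith : (0:ℝ) ≤ ystar x₂ - ystar x₁)]
  · rw [div_le_iff_of_neg (by linarith : x₂ - x₁ < 0)]
    have hy : ystar x₂ ≤ ystar x₁ := hmono (le_of_lt h)
    nlinarith [mul_nonneg (neg_nonneg.2 hcneg) (by linarith : (0:ℝ) ≤ ystar x₁ - ystar x₂)]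
end
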